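/- arXiv:math-ph/0508028 — 3 statements merged into one kernel-verified Lean document; each statement's English description precedes it below -/
import Mathlib

section
/- For any p ∈ 𝕋³ and any z ∈ ℂ \ [m(p), M(p)], the number z is an eigenvalue of the generalized Friedrichs model h(p) if and only if Δ(p,z) = 0. -/
noncomputable section

open MeasureTheory Real Set Filter Topology NNReal ENNReal

/-- We model the 3-torus `𝕋³ = (ℝ/2πℤ)³` by `ℝ³` together with periodicity
hypotheses; the fundamental domain is the cube `(-π, π]³`. -/
abbrev T3 : Type := EuclideanSpace ℝ (Fin 3)

/-- The fundamental domain `(-π,π]³` of the torus. -/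
def cube : Set T3 := {p | ∀ i, p i ∈ Set.Ioc (-Real.pi) Real.pi}

/-- Lebesgue measure on the fundamental domain (= Haar measure of the torus). -/
def μc : Measure T3 := volume.restrict cube

def cube2 : Set (T3 × T3) := cube ×ˢ cube

def μc2 : Measure (T3 × T3) := volume.restrict cube2

/-- A point of the lattice `(2πℤ)³`. -/
def latticeShift (s : Fin 3 → ℤ) : T3 := WithLp.toLp 2 (fun i => 2 * Real.pi * (s i))

/-- A function on `ℝ³` which is `(2πℤ)³`-periodic, i.e. a function on the torus. -/
def Periodic3 (f : T3 → ℝ) : Prop := ∀ (p : T3) (s : Fin 3 → ℤ), f (p + latticeShift s) = f p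

/-- Hölder continuity with exponent `θ` (the class `ℬ(θ)` of the paper). -/
def HolderB {X Y : Type*} [PseudoEMetricSpace X] [PseudoEMetricSpace Y] (θ : ℝ≥0) (f : X → Y) :
    Prop := ∃ C : ℝ≥0, HolderWith C θ f

/-- `i`-th standard basis vector. -/
def eb (i : Fin 3) : T3 := EuclideanSpace.single i 1

/-- Basic standing hypotheses on the data `u, v, w` of the model operator. -/
structure BasicSetup (u v : T3 → ℝ) (w : T3 → T3 → ℝ) : Prop where
  u_meas : Measurable u
  u_bdd : ∃ C : ℝ, ∀ p, |u p| ≤ C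
  u_per : Periodic3 u
  v_mem : MemLp v 2 μc
  v_per : Periodic3 v
  w_cont : Continuous (Function.uncurry w)
  w_bdd : ∃ C : ℝ, ∀ p q, |w p q| ≤ C
  w_symm : ∀ p q, w p q = w q p
  w_per : ∀ (s t : Fin 3 → ℤ) (p q : T3), w (p + latticeShift s) (q + latticeShift t) = w p q

/-- Part (i) of Assumption 1: `w` is symmetric, even, has a unique non-degenerate
minimum at `(0,0)` and all its third order partial derivatives are Hölder continuous
with exponent `θ ∈ (1/2,1)`. -/
structure Assumption1i (w : T3 → T3 → ℝ) (θ : ℝ≥0) : Prop where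
  theta_lb : (1:ℝ)/2 < (θ : ℝ)
  theta_ub : (θ : ℝ) < 1
  w_even : ∀ p q, w (-p) (-q) = w p q
  contDiff : ContDiff ℝ 3 (Function.uncurry w)
  min_le : ∀ p q, w 0 0 ≤ w p q
  uniqueMin : ∀ p ∈ cube, ∀ q ∈ cube, w p q = w 0 0 → p = 0 ∧ q = 0
  nondeg : ∀ x : T3 × T3, x ≠ 0 →
    0 < iteratedFDeriv ℝ 2 (Function.uncurry w) ((0 : T3), (0 : T3)) (fun _ => x)
  holder3 : HolderB θ (iteratedFDeriv ℝ 3 (Function.uncurry w))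

/-- Part (ii) of Assumption 1: the Hessian blocks of `w` at `(0,0)` are `l₁ W` and
`l₂ W` with `W` positive definite, `l₁ > 0`, `l₂ ≠ 0`. -/
structure Assumption1ii (w : T3 → T3 → ℝ) (W : Matrix (Fin 3) (Fin 3) ℝ) (l1 l2 : ℝ) : Prop where
  posdef : W.PosDef
  l1_pos : 0 < l1
  l2_ne : l2 ≠ 0
  hess_pp : ∀ i j, iteratedFDeriv ℝ 2 (Function.uncurry w) ((0 : T3), (0 : T3))
    ![(eb i, (0 : T3)), (eb j, (0 : T3))] = l1 * W i j
  hess_pq : ∀ i j, iteratedFDeriv ℝ 2 (Function.uncurry w) ((0 : T3), (0 : T3))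
    ![(eb i, (0 : T3)), ((0 : T3), eb j)] = l2 * W i j

/-- Assumption 2: `u ∈ C²` is even with a unique non-degenerate minimum at `0`;
`v` is even and Hölder continuous with exponent `θ ∈ (1/2,1)`. -/
structure Assumption2 (u v : T3 → ℝ) (θ : ℝ≥0) : Prop where
  theta_lb : (1:ℝ)/2 < (θ : ℝ)
  theta_ub : (θ : ℝ) < 1
  u_contDiff : ContDiff ℝ 2 u
  u_even : ∀ p, u (-p) = u p
  u_min : ∀ p, u 0 ≤ u p
  u_uniqueMin : ∀ p ∈ cube, u p = u 0 → p = 0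
  u_nondeg : ∀ x : T3, x ≠ 0 → 0 < iteratedFDeriv ℝ 2 u 0 (fun _ => x)
  v_even : ∀ p, v (-p) = v p
  v_holder : HolderB θ v

/-- `m = min w` (under Assumption 1 the minimum value is `w(0,0)`). -/
def mMin (w : T3 → T3 → ℝ) : ℝ := w 0 0

/-- `M = max w`. -/
def MMax (w : T3 → T3 → ℝ) : ℝ := sSup (Set.range (Function.uncurry w))

/-- `m(p) = min_q w(p,q)`. -/
def mLow (w : T3 → T3 → ℝ) (p : T3) : ℝ := sInf (Set.range (w p))

/-- `M(p) = max_q w(p,q)`. -/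
def MUp (w : T3 → T3 → ℝ) (p : T3) : ℝ := sSup (Set.range (w p))

/-- `Λ(p,z) = ∫_{𝕋³} v(t)²/(w(p,t)−z) dt`. -/
def Lam (v : T3 → ℝ) (w : T3 → T3 → ℝ) (p : T3) (z : ℝ) : ℝ :=
  ∫ t in cube, (v t) ^ 2 / (w p t - z)

/-- The Fredholm determinant `Δ(p,z) = u(p) − z − (1/2)∫ v(q)²/(w(p,q)−z) dq`. -/
def Del (u v : T3 → ℝ) (w : T3 → T3 → ℝ) (p : T3) (z : ℝ) : ℝ :=
  u p - z - (1/2) * Lam v w p z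

/-- Part (i) of Assumption 3: `Λ(·,m)` has a unique maximum at `p = 0`. -/
def Assumption3i (v : T3 → ℝ) (w : T3 → T3 → ℝ) : Prop :=
  ∀ p ∈ cube, p ≠ 0 → Lam v w p (mMin w) < Lam v w 0 (mMin w)

/-- Assumption 3: `Λ(·,m)` has a unique maximum at `p = 0`, and
`Λ(0,m) − Λ(p,m) > c|p|²` near `0`. -/
structure Assumption3 (v : T3 → ℝ) (w : T3 → T3 → ℝ) : Prop where
  uniqueMax : Assumption3i v w
  quad : ∃ δ > (0:ℝ), ∃ c > (0:ℝ), ∀ p : T3, p ≠ 0 → ‖p‖ < δ →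
    c * ‖p‖ ^ 2 < Lam v w 0 (mMin w) - Lam v w p (mMin w)

/-- `z` is an eigenvalue of the generalized Friedrichs model `h(p)` acting on
`ℂ ⊕ L²(𝕋³)` (real form): there is a nonzero `(f₀, f₁)` with `f₁ ∈ L²` solving the
eigenvalue equations. -/
def IsEigh (u v : T3 → ℝ) (w : T3 → T3 → ℝ) (p : T3) (z : ℝ) : Prop :=
  ∃ (f₀ : ℝ) (f₁ : T3 → ℝ),
    MemLp f₁ 2 μc ∧
    ¬ (f₀ = 0 ∧ f₁ =ᵐ[μc] 0) ∧
    u p * f₀ + (Real.sqrt 2)⁻¹ * (∫ q in cube, v q * f₁ q) = z * f₀ ∧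
    (∀ᵐ q ∂μc, (Real.sqrt 2)⁻¹ * v q * f₀ + w p q * f₁ q = z * f₁ q)

/-- Complex version: `z ∈ ℂ` is an eigenvalue of `h(p)` on `ℂ ⊕ L²(𝕋³; ℂ)`. -/
def IsEighC (u v : T3 → ℝ) (w : T3 → T3 → ℝ) (p : T3) (z : ℂ) : Prop :=
  ∃ (f₀ : ℂ) (f₁ : T3 → ℂ),
    MemLp f₁ 2 μc ∧
    ¬ (f₀ = 0 ∧ f₁ =ᵐ[μc] 0) ∧
    (u p : ℂ) * f₀ + ((Real.sqrt 2 : ℂ))⁻¹ * (∫ q in cube, (v q : ℂ) * f₁ q) = z * f₀ ∧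
    (∀ᵐ q ∂μc, ((Real.sqrt 2 : ℂ))⁻¹ * (v q : ℂ) * f₀ + (w p q : ℂ) * f₁ q = z * f₁ q)

/-- Complex Fredholm determinant of `h(p)`. -/
def DelC (u v : T3 → ℝ) (w : T3 → T3 → ℝ) (p : T3) (z : ℂ) : ℂ :=
  (u p : ℂ) - z - (1/2 : ℂ) * ∫ q in cube, ((v q : ℂ)) ^ 2 / ((w p q : ℂ) - z)

/-- `(f₀, f₁, f₂)` solves the eigenvalue equations `H f = z f` for the model
operator `H` on `ℂ ⊕ L²(𝕋³) ⊕ L²ₛ((𝕋³)²)` (real form, possibly `f = 0`). -/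
structure IsEigSolH (u₀ : ℝ) (u v : T3 → ℝ) (w : T3 → T3 → ℝ) (z : ℝ)
    (f₀ : ℝ) (f₁ : T3 → ℝ) (f₂ : T3 → T3 → ℝ) : Prop where
  mem1 : MemLp f₁ 2 μc
  mem2 : MemLp (Function.uncurry f₂) 2 μc2
  symm2 : ∀ p q, f₂ p q = f₂ q p
  eq0 : u₀ * f₀ + (∫ q in cube, v q * f₁ q) = z * f₀
  eq1 : ∀ᵐ p ∂μc, v p * f₀ + u p * f₁ p + (∫ q in cube, v q * f₂ p q) = z * f₁ p
  eq2 : ∀ᵐ x ∂μc2,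
    (1/2) * (v x.2 * f₁ x.1 + v x.1 * f₁ x.2) + w x.1 x.2 * f₂ x.1 x.2 = z * f₂ x.1 x.2

/-- `z` is an eigenvalue of the model operator `H`. -/
def IsEigH (u₀ : ℝ) (u v : T3 → ℝ) (w : T3 → T3 → ℝ) (z : ℝ) : Prop :=
  ∃ (f₀ : ℝ) (f₁ : T3 → ℝ) (f₂ : T3 → T3 → ℝ),
    IsEigSolH u₀ u v w z f₀ f₁ f₂ ∧
    ¬ (f₀ = 0 ∧ f₁ =ᵐ[μc] 0 ∧ Function.uncurry f₂ =ᵐ[μc2] 0)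

/-- A family of vectors of `ℂ ⊕ L² ⊕ L²ₛ` (in function form) is linearly independent
modulo almost-everywhere equality. -/
def AEIndep {n : ℕ} (F : Fin n → ℝ × (T3 → ℝ) × (T3 → T3 → ℝ)) : Prop :=
  ∀ c : Fin n → ℝ,
    (∑ i, c i * (F i).1 = 0) →
    ((fun q => ∑ i, c i * (F i).2.1 q) =ᵐ[μc] 0) →
    ((fun x : T3 × T3 => ∑ i, c i * (F i).2.2 x.1 x.2) =ᵐ[μc2] 0) →
    c = 0

/-- The multiplicity of `z` as an eigenvalue of `H`: the largest number of linearly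
independent (mod a.e. equality) solutions of `H f = z f`. -/
def multH (u₀ : ℝ) (u v : T3 → ℝ) (w : T3 → T3 → ℝ) (z : ℝ) : ℕ :=
  sSup {n : ℕ | ∃ F : Fin n → ℝ × (T3 → ℝ) × (T3 → T3 → ℝ),
    (∀ i, IsEigSolH u₀ u v w z (F i).1 (F i).2.1 (F i).2.2) ∧ AEIndep F}

/-- `N(z)`: the number of eigenvalues of `H` below `z`, counted with multiplicity. -/
def Ncount (u₀ : ℝ) (u v : T3 → ℝ) (w : T3 → T3 → ℝ) (z : ℝ) : ℝ≥0∞ :=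
  ∑' x : {x : ℝ // x < z ∧ IsEigH u₀ u v w x}, (multH u₀ u v w x : ℝ≥0∞)

/-- The operator `h(0)` has an `m`-energy resonance. -/
def HasResonance (u v : T3 → ℝ) (w : T3 → T3 → ℝ) : Prop :=
  u 0 ≠ mMin w ∧
  ∃ ψ : T3 → ℝ, Continuous ψ ∧ ψ 0 ≠ 0 ∧
    ∀ q, ψ q = v q / (2 * (u 0 - mMin w)) * ∫ t in cube, v t * ψ t / (w 0 t - mMin w)

/-! Eliminating `f₁` from the second eigenvalue equation gives `f₁ = -c f₀ (w - z)⁻¹ v`; substituting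
it into the first one leaves `f₀ Δ(z) = 0`. Off `[m(p), M(p)]` the resolvent `(w(p,·) - z)⁻¹` is
bounded, so conversely `f₀ = 1`, `f₁ = -c (w - z)⁻¹ v` is an `L²` eigenvector whenever `Δ(z) = 0`. -/

section FriedrichsModel

variable {α : Type*} [MeasurableSpace α] (μ : Measure α) (a c : ℂ) (v W : α → ℂ) (z : ℂ)

/-- `z` is an eigenvalue of the Friedrichs model
`(f₀, f₁) ↦ (a f₀ + c ∫ v f₁ dμ, c v f₀ + W f₁)` on `ℂ ⊕ L²(μ)`. -/
def IsFriedrichsEigenvalue : Prop :=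
  ∃ (f₀ : ℂ) (f₁ : α → ℂ),
    MemLp f₁ 2 μ ∧
    ¬ (f₀ = 0 ∧ f₁ =ᵐ[μ] 0) ∧
    a * f₀ + c * (∫ q, v q * f₁ q ∂μ) = z * f₀ ∧
    (∀ᵐ q ∂μ, c * v q * f₀ + W q * f₁ q = z * f₁ q)

def friedrichsDet : ℂ :=
  a - z - c ^ 2 * ∫ q, v q ^ 2 / (W q - z) ∂μ

def friedrichsEigenfun (q : α) : ℂ :=
  -c * v q / (W q - z)

variable {μ a c v W z}

theorem integral_mul_friedrichsEigenfun :
    ∫ q, v q * friedrichsEigenfun c v W z q ∂μ = -c * ∫ q, v q ^ 2 / (W q - z) ∂μ := by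
  rw [← integral_const_mul]
  congr 1 with q
  rw [friedrichsEigenfun]
  ring

theorem memLp_friedrichsEigenfun (hv : MemLp v 2 μ) (hr : MemLp (fun q => (W q - z)⁻¹) ∞ μ) :
    MemLp (friedrichsEigenfun c v W z) 2 μ := by
  have hrv : MemLp (fun q => v q * (W q - z)⁻¹) 2 μ := hr.mul' hv
  convert hrv.const_mul (-c) using 1
  funext q
  rw [friedrichsEigenfun]
  ring

theorem ae_eq_const_mul_friedrichsEigenfun (hW : ∀ᵐ q ∂μ, W q ≠ z) {f₀ : ℂ} {f₁ : α → ℂ}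
    (hf : ∀ᵐ q ∂μ, c * v q * f₀ + W q * f₁ q = z * f₁ q) :
    f₁ =ᵐ[μ] fun q => f₀ * friedrichsEigenfun c v W z q := by
  filter_upwards [hW, hf] with q hWq hq
  rw [friedrichsEigenfun, mul_div_assoc', eq_div_iff (sub_ne_zero.2 hWq)]
  linear_combination hq

theorem IsFriedrichsEigenvalue.friedrichsDet_eq_zero (hW : ∀ᵐ q ∂μ, W q ≠ z)
    (h : IsFriedrichsEigenvalue μ a c v W z) : friedrichsDet μ a c v W z = 0 := by
  obtain ⟨f₀, f₁, -, hne, heq₀, heq₁⟩ := h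
  have hf₁ := ae_eq_const_mul_friedrichsEigenfun hW heq₁
  have hf₀ : f₀ ≠ 0 := by
    rintro rfl
    exact hne ⟨rfl, hf₁.trans (ae_of_all _ fun q => zero_mul _)⟩
  have hint : ∫ q, v q * f₁ q ∂μ = -c * f₀ * ∫ q, v q ^ 2 / (W q - z) ∂μ := by
    calc ∫ q, v q * f₁ q ∂μ = ∫ q, f₀ * (v q * friedrichsEigenfun c v W z q) ∂μ := by
          refine integral_congr_ae ?_
          filter_upwards [hf₁] with q hq
          rw [hq]
          ring
      _ = -c * f₀ * ∫ q, v q ^ 2 / (W q - z) ∂μ := by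
          rw [integral_const_mul, integral_mul_friedrichsEigenfun]
          ring
  refine (mul_eq_zero.1 ?_).resolve_right hf₀
  rw [hint] at heq₀
  rw [friedrichsDet]
  linear_combination heq₀

theorem isFriedrichsEigenvalue_of_friedrichsDet_eq_zero (hv : MemLp v 2 μ)
    (hr : MemLp (fun q => (W q - z)⁻¹) ∞ μ) (hW : ∀ᵐ q ∂μ, W q ≠ z)
    (h : friedrichsDet μ a c v W z = 0) : IsFriedrichsEigenvalue μ a c v W z := by
  refine ⟨1, friedrichsEigenfun c v W z, memLp_friedrichsEigenfun hv hr, fun h => one_ne_zero h.1,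
    ?_, ?_⟩
  · rw [integral_mul_friedrichsEigenfun]
    rw [friedrichsDet] at h
    linear_combination h
  · filter_upwards [hW] with q hWq
    rw [friedrichsEigenfun]
    field_simp [sub_ne_zero.2 hWq]
    ring

end FriedrichsModel

theorem memLp_top_inv_sub_ofReal {α : Type*} [MeasurableSpace α] {μ : Measure α} {f : α → ℝ}
    (hf : AEMeasurable f μ) {a b : ℝ} (hfab : ∀ᵐ q ∂μ, f q ∈ Icc a b) {z : ℂ}
    (hz : ∀ x : ℝ, a ≤ x → x ≤ b → (x : ℂ) ≠ z) :
    MemLp (fun q => ((f q : ℂ) - z)⁻¹) ∞ μ := by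
  have hcont : ContinuousOn (fun x : ℝ => ((x : ℂ) - z)⁻¹) (Icc a b) :=
    (Complex.continuous_ofReal.sub continuous_const).continuousOn.inv₀
      fun x hx => sub_ne_zero.2 (hz x hx.1 hx.2)
  obtain ⟨C, hC⟩ := isCompact_Icc.exists_bound_of_continuousOn hcont
  refine memLp_top_of_bound ?_ C (hfab.mono fun q hq => hC _ hq)
  exact ((Complex.measurable_ofReal.comp_aemeasurable hf).sub_const z).inv.aestronglyMeasurable

theorem mem_Icc_mLow_MUp {w : T3 → T3 → ℝ} (hw : ∃ C : ℝ, ∀ p q, |w p q| ≤ C) (p q : T3) :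
    w p q ∈ Icc (mLow w p) (MUp w p) := by
  obtain ⟨C, hC⟩ := hw
  refine ⟨csInf_le ⟨-C, ?_⟩ ⟨q, rfl⟩, le_csSup ⟨C, ?_⟩ ⟨q, rfl⟩⟩ <;> rintro _ ⟨q, rfl⟩
  exacts [(abs_le.1 (hC p q)).1, (abs_le.1 (hC p q)).2]

theorem inv_ofReal_sqrt_two_sq : (((√2 : ℝ) : ℂ)⁻¹) ^ 2 = 1 / 2 := by
  rw [inv_pow, ← Complex.ofReal_pow, Real.sq_sqrt zero_le_two]
  norm_num

/-- for `z ∈ ℂ \ [m(p), M(p)]`, `z` is an eigenvalue of the generalized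
Friedrichs model `h(p)` iff `Δ(p,z) = 0`. -/
theorem eigenvalue_iff_fredholm_det_zero
    (u v : T3 → ℝ) (w : T3 → T3 → ℝ)
    (hb : BasicSetup u v w)
    (p : T3) (z : ℂ)
    (hz : ∀ x : ℝ, mLow w p ≤ x → x ≤ MUp w p → (x : ℂ) ≠ z) :
    IsEighC u v w p z ↔ DelC u v w p z = 0 := by
  have hwp : ∀ q, w p q ∈ Icc (mLow w p) (MUp w p) := mem_Icc_mLow_MUp hb.w_bdd p
  have hW : ∀ᵐ q ∂μc, (w p q : ℂ) ≠ z := ae_of_all _ fun q => hz _ (hwp q).1 (hwp q).2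
  have hr : MemLp (fun q => ((w p q : ℂ) - z)⁻¹) ∞ μc :=
    memLp_top_inv_sub_ofReal (hb.w_cont.comp (Continuous.prodMk_right p)).aemeasurable
      (ae_of_all _ hwp) hz
  have hdet : DelC u v w p z =
      friedrichsDet μc (u p) ((√2 : ℝ) : ℂ)⁻¹ (fun q => v q) (fun q => w p q) z := by
    rw [friedrichsDet, inv_ofReal_sqrt_two_sq]
    rfl
  rw [hdet]
  exact ⟨IsFriedrichsEigenvalue.friedrichsDet_eq_zero hW,
    isFriedrichsEigenvalue_of_friedrichsDet_eq_zero hb.v_mem.ofReal hr hW⟩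
end
end

section
/- Suppose part (i) of Assumption 1 holds, v is Hölder continuous on 𝕋³ with exponent θ ∈ (1/2,1), and max_{p∈𝕋³} Δ(p,m) < 0. Then for every p ∈ 𝕋³ the operator h(p) has exactly one eigenvalue in (−∞, m); equivalently, for every p ∈ 𝕋³ there is a unique z < m with Δ(p,z) = 0. -/
noncomputable section

open MeasureTheory Real Set Filter Topology NNReal ENNReal

/-! For `z < m` the second eigenvalue equation forces `f₁ = -f₀ v / (√2 (w(p,·) - z))`, and
the first one then reads `f₀ Δ(p,z) = 0`; so below `m` the eigenvalues of `h(p)` are exactly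
the zeros of `Δ(p,·)`. On `(-∞, m)` the function `Δ(p,·)` is continuous and strictly
decreasing, because `Λ(p,·)` is increasing, and it is positive far to the left. Since
`w(p,·) > m` almost everywhere, dominated convergence gives `Δ(p,z) → Δ(p,m) < 0` as
`z ↑ m`, and the intermediate value theorem yields exactly one zero. -/

lemma norm_div_sub_le {a b c z : ℝ} (hb : c ≤ b) (hz : z < c) :
    ‖a / (b - z)‖ ≤ ‖a‖ / (c - z) := by
  rw [norm_div, Real.norm_of_nonneg (by linarith : 0 ≤ b - z)]
  exact div_le_div_of_nonneg_left (norm_nonneg _) (by linarith) (by linarith)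

section DivSub

variable {X : Type*} [MeasurableSpace X] {μ : Measure X} {f g : X → ℝ} {c z : ℝ}

lemma aemeasurable_div_sub (hf : AEMeasurable f μ) (hg : AEMeasurable g μ) (z : ℝ) :
    AEMeasurable (fun t => f t / (g t - z)) μ :=
  hf.div (hg.sub_const z)

lemma integrable_div_sub (hf : Integrable f μ) (hg : AEMeasurable g μ) (hgc : ∀ t, c ≤ g t)
    (hz : z < c) : Integrable (fun t => f t / (g t - z)) μ :=
  (hf.norm.div_const (c - z)).mono' (aemeasurable_div_sub hf.aemeasurable hg z).aestronglyMeasurable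
    (ae_of_all _ fun _ => norm_div_sub_le (hgc _) hz)

lemma integral_div_sub_mono (hf : Integrable f μ) (hf0 : 0 ≤ f) (hg : AEMeasurable g μ)
    (hgc : ∀ t, c ≤ g t) {z₁ z₂ : ℝ} (h12 : z₁ ≤ z₂) (hz : z₂ < c) :
    ∫ t, f t / (g t - z₁) ∂μ ≤ ∫ t, f t / (g t - z₂) ∂μ :=
  integral_mono (integrable_div_sub hf hg hgc (h12.trans_lt hz)) (integrable_div_sub hf hg hgc hz)
    fun t => div_le_div_of_nonneg_left (hf0 t) (by linarith [hgc t]) (by linarith)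

lemma continuousOn_integral_div_sub (hf : Integrable f μ) (hg : AEMeasurable g μ)
    (hgc : ∀ t, c ≤ g t) : ContinuousOn (fun z => ∫ t, f t / (g t - z) ∂μ) (Iio c) := by
  intro z (hz : z < c)
  obtain ⟨b, hzb, hbc⟩ := exists_between hz
  refine (continuousAt_of_dominated (bound := fun t => ‖f t‖ / (c - b))
    (Eventually.of_forall fun z' =>
      (aemeasurable_div_sub hf.aemeasurable hg z').aestronglyMeasurable)
    ?_ (hf.norm.div_const _) (ae_of_all _ fun t => ?_)).continuousWithinAt
  · filter_upwards [eventually_lt_nhds hzb] with z' hz'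
    refine ae_of_all _ fun t => (norm_div_sub_le (hgc t) (hz'.trans hbc)).trans ?_
    exact div_le_div_of_nonneg_left (norm_nonneg _) (by linarith) (by linarith)
  · exact continuousAt_const.div (continuousAt_const.sub continuousAt_id)
      (by linarith [hgc t])

lemma tendsto_integral_div_sub_nhdsLT (hf : AEMeasurable f μ) (hg : AEMeasurable g μ)
    (hgc : ∀ᵐ t ∂μ, c < g t) (hint : Integrable (fun t => f t / (g t - c)) μ) :
    Tendsto (fun z => ∫ t, f t / (g t - z) ∂μ) (𝓝[<] c)
      (𝓝 (∫ t, f t / (g t - c) ∂μ)) := by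
  refine tendsto_integral_filter_of_dominated_convergence _
    (Eventually.of_forall fun z => (aemeasurable_div_sub hf hg z).aestronglyMeasurable) ?_
    hint.norm ?_
  · filter_upwards [self_mem_nhdsWithin] with z (hz : z < c)
    filter_upwards [hgc] with t ht
    rw [norm_div, norm_div, Real.norm_of_nonneg (by linarith : 0 ≤ g t - z),
      Real.norm_of_nonneg (by linarith : 0 ≤ g t - c)]
    exact div_le_div_of_nonneg_left (norm_nonneg _) (by linarith) (by linarith)
  · filter_upwards [hgc] with t ht
    exact (tendsto_const_nhds.div (tendsto_const_nhds.sub tendsto_id) (by linarith)).mono_left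
      nhdsWithin_le_nhds

end DivSub

lemma existsUnique_lt_eq_zero_of_strictAntiOn {F : ℝ → ℝ} {c : ℝ}
    (hanti : StrictAntiOn F (Iio c)) (hcont : ContinuousOn F (Iio c))
    (hpos : ∃ a < c, 0 < F a) (hneg : ∃ b < c, F b < 0) :
    ∃! z, z < c ∧ F z = 0 := by
  obtain ⟨a, hac, ha⟩ := hpos
  obtain ⟨b, hbc, hb⟩ := hneg
  obtain ⟨z, hz, hFz⟩ := isPreconnected_Iio.intermediate_value hbc hac hcont ⟨hb.le, ha.le⟩
  exact ⟨z, ⟨hz, hFz⟩, fun y hy => hanti.injOn hy.1 hz (hy.2.trans hFz.symm)⟩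

lemma measurableSet_cube : MeasurableSet cube := by
  have : cube = ⋂ i : Fin 3, (fun p : T3 => p i) ⁻¹' Ioc (-π) π := by
    ext p; simp [cube]
  rw [this]
  exact MeasurableSet.iInter fun i => measurableSet_Ioc.preimage (by fun_prop)

lemma exists_mem_cube_eq_add_latticeShift (p : T3) :
    ∃ p₀ ∈ cube, ∃ s : Fin 3 → ℤ, p = p₀ + latticeShift s := by
  set s : Fin 3 → ℤ := fun i => toIocDiv two_pi_pos (-π) (p i)
  refine ⟨p - latticeShift s, fun i => ?_, s, by abel⟩
  have h := toIocMod_mem_Ioc two_pi_pos (-π) (p i)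
  rw [← self_sub_toIocDiv_zsmul, zsmul_eq_mul] at h
  have hs : (p - latticeShift s) i = p i - (s i : ℝ) * (2 * π) := by simp [latticeShift]; ring
  rw [hs]
  exact ⟨h.1, by linarith [h.2]⟩

lemma latticeShift_zero : latticeShift 0 = 0 := by
  ext i; simp [latticeShift]

/-- Periodicity reduces `p` to the fundamental domain, where `w p t = m` forces `t = 0`. -/
lemma ae_mMin_lt {w : T3 → T3 → ℝ}
    (hper : ∀ (s t : Fin 3 → ℤ) (p q : T3),
      w (p + latticeShift s) (q + latticeShift t) = w p q)
    (hmin : ∀ p q, w 0 0 ≤ w p q)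
    (huniq : ∀ p ∈ cube, ∀ q ∈ cube, w p q = w 0 0 → p = 0 ∧ q = 0) (p : T3) :
    ∀ᵐ t ∂μc, mMin w < w p t := by
  obtain ⟨p₀, hp₀, s, rfl⟩ := exists_mem_cube_eq_add_latticeShift p
  rw [μc, ae_restrict_iff' measurableSet_cube]
  filter_upwards [compl_mem_ae_iff.2 (measure_singleton (μ := volume) (0 : T3))] with t ht htc
  have hshift : w (p₀ + latticeShift s) t = w p₀ t := by
    simpa [latticeShift_zero] using hper s 0 p₀ t
  rw [hshift]
  exact (hmin p₀ t).lt_of_ne fun h => ht (huniq p₀ hp₀ t htc h.symm).2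

section FriedrichsModel

variable {u v : T3 → ℝ} {w : T3 → T3 → ℝ} {p : T3}

lemma Lam_eq_integral (z : ℝ) : Lam v w p z = ∫ t, v t ^ 2 / (w p t - z) ∂μc := rfl

lemma integral_mul_resolvent (a : ℝ) {z : ℝ} :
    ∫ q in cube, v q * (a * v q / (w p q - z)) = a * Lam v w p z := by
  rw [Lam, ← integral_const_mul]
  congr 1 with q
  ring

lemma Lam_nonneg (hmin : ∀ q, mMin w ≤ w p q) {z : ℝ} (hz : z < mMin w) : 0 ≤ Lam v w p z :=
  integral_nonneg fun t => div_nonneg (sq_nonneg _) (by linarith [hmin t])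

variable (hv : MemLp v 2 μc) (hw : Measurable (w p)) (hmin : ∀ q, mMin w ≤ w p q)
include hv hw hmin

lemma Lam_mono {z₁ z₂ : ℝ} (h12 : z₁ ≤ z₂) (hz : z₂ < mMin w) :
    Lam v w p z₁ ≤ Lam v w p z₂ :=
  integral_div_sub_mono hv.integrable_sq (fun _ => sq_nonneg _) hw.aemeasurable hmin h12 hz

lemma Del_strictAntiOn : StrictAntiOn (Del u v w p) (Iio (mMin w)) := by
  intro z₁ _ z₂ (hz₂ : z₂ < mMin w) h12
  have := Lam_mono hv hw hmin h12.le hz₂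
  simp only [Del]
  linarith

lemma Del_continuousOn : ContinuousOn (Del u v w p) (Iio (mMin w)) :=
  (continuousOn_const.sub continuousOn_id).sub <| continuousOn_const.mul <|
    continuousOn_integral_div_sub hv.integrable_sq hw.aemeasurable hmin

lemma exists_Del_pos : ∃ a < mMin w, 0 < Del u v w p a := by
  set m := mMin w
  set a := min (m - 1) (u p - Lam v w p (m - 1) / 2 - 1)
  have ha₁ : a ≤ m - 1 := min_le_left _ _
  have ha₂ : a ≤ u p - Lam v w p (m - 1) / 2 - 1 := min_le_right _ _
  have hLam := Lam_mono hv hw hmin ha₁ (by linarith)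
  refine ⟨a, by linarith, ?_⟩
  simp only [Del]
  linarith

/-- If `Λ(p,m)` is a genuine integral, `Δ(p,·)` is left-continuous at `m`; otherwise
`Λ(p,m) = 0` is a junk value and `Δ(p,m) = u(p) - m`, which is still an upper bound of
`Δ(p,z)` near `m`. -/
lemma exists_Del_neg (hae : ∀ᵐ t ∂μc, mMin w < w p t) (hm : Del u v w p (mMin w) < 0) :
    ∃ b < mMin w, Del u v w p b < 0 := by
  set m := mMin w
  by_cases hint : Integrable (fun t => v t ^ 2 / (w p t - m)) μc
  · have hLam : Tendsto (Lam v w p) (𝓝[<] m) (𝓝 (Lam v w p m)) :=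
      tendsto_integral_div_sub_nhdsLT (hv.aestronglyMeasurable.aemeasurable.pow_const 2)
        hw.aemeasurable hae hint
    have hDel : Tendsto (Del u v w p) (𝓝[<] m) (𝓝 (Del u v w p m)) :=
      (tendsto_const_nhds.sub (tendsto_id.mono_left nhdsWithin_le_nhds)).sub
        (tendsto_const_nhds.mul hLam)
    exact (eventually_mem_nhdsWithin.and (hDel.eventually_lt_const hm)).exists
  · have hum : u p < m := by
      simpa [Del, Lam_eq_integral, integral_undef hint] using hm
    refine ⟨(u p + m) / 2, by linarith, ?_⟩
    have := Lam_nonneg (v := v) hmin (show (u p + m) / 2 < m by linarith)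
    simp only [Del]
    linarith

lemma memLp_resolvent (a : ℝ) {z : ℝ} (hz : z < mMin w) :
    MemLp (fun q => a * v q / (w p q - z)) 2 μc :=
  (hv.const_mul a).of_le_mul (c := (mMin w - z)⁻¹)
    (aemeasurable_div_sub (hv.aestronglyMeasurable.aemeasurable.const_mul a) hw.aemeasurable
      z).aestronglyMeasurable
    (ae_of_all _ fun q => (norm_div_sub_le (hmin q) hz).trans_eq (div_eq_inv_mul _ _))

lemma isEigh_iff_Del_eq_zero {z : ℝ} (hz : z < mMin w) :
    IsEigh u v w p z ↔ Del u v w p z = 0 := by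
  have hne : ∀ q, w p q - z ≠ 0 := fun q => by linarith [hmin q]
  have hsqrt : (√2)⁻¹ * (√2)⁻¹ = (1 / 2 : ℝ) := by
    rw [← mul_inv, Real.mul_self_sqrt zero_le_two, one_div]
  constructor
  · rintro ⟨f₀, f₁, -, hnz, heq₀, heq₁⟩
    have hf₁ : f₁ =ᵐ[μc] fun q => (-(√2)⁻¹ * f₀) * v q / (w p q - z) := by
      filter_upwards [heq₁] with q hq
      rw [eq_div_iff (hne q)]
      linear_combination hq
    have hf₀ : f₀ ≠ 0 := fun h₀ => hnz ⟨h₀, hf₁.trans (by simp [h₀]; rfl)⟩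
    have hpair : ∫ q in cube, v q * f₁ q = -(√2)⁻¹ * f₀ * Lam v w p z := by
      rw [← integral_mul_resolvent]
      exact integral_congr_ae (hf₁.mono fun q hq => by simp only [hq])
    rw [hpair] at heq₀
    have key : f₀ * Del u v w p z = 0 := by
      simp only [Del]
      linear_combination heq₀ + f₀ * Lam v w p z * hsqrt
    exact (mul_eq_zero.mp key).resolve_left hf₀
  · intro hDel
    refine ⟨1, fun q => -(√2)⁻¹ * v q / (w p q - z), ?_, by simp, ?_, ?_⟩
    · exact memLp_resolvent hv hw hmin _ hz
    · rw [integral_mul_resolvent]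
      simp only [Del] at hDel
      linear_combination hDel - Lam v w p z * hsqrt
    · refine ae_of_all _ fun q => ?_
      field_simp [hne q]
      ring

end FriedrichsModel

theorem unique_eigenvalue_below_m_of_max_neg_general
    (u v : T3 → ℝ) (w : T3 → T3 → ℝ) (θ : ℝ≥0)
    (hb : BasicSetup u v w)
    (h1i : Assumption1i w θ)
    (hmax : sSup (Set.range fun p => Del u v w p (mMin w)) < 0) :
    ∀ p : T3,
      (∃! z : ℝ, z < mMin w ∧ IsEigh u v w p z) ∧
      (∃! z : ℝ, z < mMin w ∧ Del u v w p z = 0) := by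
  have hbdd : BddAbove (Set.range fun p => Del u v w p (mMin w)) := by
    by_contra h
    rw [Real.sSup_of_not_bddAbove h] at hmax
    exact hmax.false
  intro p
  have hw : Measurable (w p) := (hb.w_cont.uncurry_left p).measurable
  have hmin : ∀ q, mMin w ≤ w p q := h1i.min_le p
  have hDel : ∃! z : ℝ, z < mMin w ∧ Del u v w p z = 0 :=
    existsUnique_lt_eq_zero_of_strictAntiOn (Del_strictAntiOn hb.v_mem hw hmin)
      (Del_continuousOn hb.v_mem hw hmin) (exists_Del_pos hb.v_mem hw hmin)
      (exists_Del_neg hb.v_mem hw hmin (ae_mMin_lt hb.w_per h1i.min_le h1i.uniqueMin p)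
        ((le_csSup hbdd ⟨p, rfl⟩).trans_lt hmax))
  refine ⟨(existsUnique_congr fun z => ?_).2 hDel, hDel⟩
  exact and_congr_right (isEigh_iff_Del_eq_zero hb.v_mem hw hmin)

/-- if `max_p Δ(p,m) < 0`, then every `h(p)` has exactly one eigenvalue
below `m`; equivalently `Δ(p,·)` has a unique zero below `m`. -/
theorem unique_eigenvalue_below_m_of_max_neg
    (u v : T3 → ℝ) (w : T3 → T3 → ℝ) (θ : ℝ≥0)
    (hb : BasicSetup u v w)
    (h1i : Assumption1i w θ)
    (hv : HolderB θ v)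
    (hmax : sSup (Set.range fun p => Del u v w p (mMin w)) < 0) :
    ∀ p : T3,
      (∃! z : ℝ, z < mMin w ∧ IsEigh u v w p z) ∧
      (∃! z : ℝ, z < mMin w ∧ Del u v w p z = 0) :=
  unique_eigenvalue_below_m_of_max_neg_general u v w θ hb h1i hmax
end
end

section
/- Suppose Assumptions 1, 2 and 3 hold, Δ(0,m) = 0 and v(0) = 0 (so that z = m is an eigenvalue of h(0)). Then there exist δ > 0 and c > 0 such that |Δ(p,m)| ≥ c·|p|² for all p with |p| < δ, and |Δ(p,m)| ≥ c for all p ∈ 𝕋³ with |p| ≥ δ. -/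
noncomputable section

open MeasureTheory Real Set Filter Topology NNReal ENNReal

/-!
Since `Δ(0,m) = 0`, `Δ(p,m) = (u(p) − u(0)) + ½(Λ(0,m) − Λ(p,m))`, and on the cube both terms
are nonnegative (`0` is the minimum of `u` and the maximum of `Λ(·,m)`). Near `0` the second
term is at least `c|p|²` by Assumption 3. Away from `0` the first term is bounded below by a
positive constant: `u − u(0)` is continuous and positive on the compact set
`{p ∈ [−π,π]³ : |p| ≥ δ}`, because by periodicity a zero there would give a second minimum of `u`
on the torus.
-/

def closedCube : Set T3 := {p | ∀ i, p i ∈ Icc (-π) π}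

lemma cube_subset_closedCube : cube ⊆ closedCube :=
  fun _ hp i => Ioc_subset_Icc_self (hp i)

lemma isCompact_closedCube : IsCompact closedCube := by
  have : closedCube = EuclideanSpace.equiv (Fin 3) ℝ ⁻¹' univ.pi fun _ => Icc (-π) π := by
    ext; simp only [closedCube, mem_preimage, mem_univ_pi]; rfl
  rw [this, ← ContinuousLinearEquiv.coe_toHomeomorph, Homeomorph.isCompact_preimage]
  exact isCompact_univ_pi fun _ => isCompact_Icc

lemma exists_add_latticeShift_mem_cube (p : T3) : ∃ s, p + latticeShift s ∈ cube := by
  refine ⟨fun i => -toIocDiv two_pi_pos (-π) (p i), fun i => ?_⟩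
  have h := sub_toIocDiv_zsmul_mem_Ioc two_pi_pos (-π) (p i)
  rw [zsmul_eq_mul, show -π + 2 * π = π by ring] at h
  simp only [latticeShift, PiLp.add_apply, Int.cast_neg]
  convert h using 1
  ring

lemma eq_zero_of_add_latticeShift_eq_zero {p : T3} (hp : p ∈ closedCube) {s : Fin 3 → ℤ}
    (h : p + latticeShift s = 0) : p = 0 := by
  ext i
  have hi : p i + 2 * π * s i = 0 := by simpa [latticeShift] using congrArg (· i) h
  have hs : |(s i : ℝ)| < 1 := by
    rw [abs_lt]; constructor <;> nlinarith [Real.pi_pos, (hp i).1, (hp i).2]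
  rw [← Int.cast_abs, ← Int.cast_one, Int.cast_lt, Int.abs_lt_one_iff] at hs
  simpa [hs] using hi

namespace Periodic3

lemma lt_apply_of_mem_closedCube {f : T3 → ℝ} (hf : Periodic3 f) (hmin : ∀ p, f 0 ≤ f p)
    (huniq : ∀ p ∈ cube, f p = f 0 → p = 0) {p : T3} (hp : p ∈ closedCube) (hp0 : p ≠ 0) :
    f 0 < f p := by
  refine (hmin p).lt_of_ne fun h => hp0 ?_
  obtain ⟨s, hs⟩ := exists_add_latticeShift_mem_cube p
  exact eq_zero_of_add_latticeShift_eq_zero hp (huniq _ hs ((hf p s).trans h.symm))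

lemma exists_pos_le_sub_of_le_norm {f : T3 → ℝ} (hf : Periodic3 f) (hmin : ∀ p, f 0 ≤ f p)
    (huniq : ∀ p ∈ cube, f p = f 0 → p = 0) (hcont : Continuous f) {δ : ℝ} (hδ : 0 < δ) :
    ∃ ε > 0, ∀ p ∈ cube, δ ≤ ‖p‖ → ε ≤ f p - f 0 := by
  have hK : IsCompact (closedCube ∩ {p | δ ≤ ‖p‖}) :=
    isCompact_closedCube.inter_right (isClosed_le continuous_const continuous_norm)
  obtain ⟨ε, hε, hεK⟩ := hK.exists_forall_le' (a := 0) (hcont.sub continuous_const).continuousOn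
    fun p ⟨hp, hpδ⟩ => sub_pos.2 <| hf.lt_apply_of_mem_closedCube hmin huniq hp
      (ne_zero_of_norm_ne_zero (hδ.trans_le hpδ).ne')
  exact ⟨ε, hε, fun p hp hpδ => hεK p ⟨cube_subset_closedCube hp, hpδ⟩⟩

end Periodic3

lemma Del_eq_of_Del_zero_eq_zero {u v : T3 → ℝ} {w : T3 → T3 → ℝ} {z : ℝ}
    (h : Del u v w 0 z = 0) (p : T3) :
    Del u v w p z = (u p - u 0) + (1/2) * (Lam v w 0 z - Lam v w p z) := by
  simp only [Del] at h ⊢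
  linarith

theorem Del_bounds_eigenvalue_case_general
    (u v : T3 → ℝ) (w : T3 → T3 → ℝ) (θ : ℝ≥0)
    (hb : BasicSetup u v w)
    (h2 : Assumption2 u v θ) (h3 : Assumption3 v w)
    (hΔ : Del u v w 0 (mMin w) = 0) :
    ∃ δ > (0:ℝ), ∃ c > (0:ℝ),
      (∀ p : T3, ‖p‖ < δ → c * ‖p‖ ^ 2 ≤ |Del u v w p (mMin w)|) ∧
      (∀ p ∈ cube, δ ≤ ‖p‖ → c ≤ |Del u v w p (mMin w)|) := by
  obtain ⟨δ, hδ, c, hc, hquad⟩ := h3.quad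
  obtain ⟨ε, hε, hεu⟩ := hb.u_per.exists_pos_le_sub_of_le_norm h2.u_min h2.u_uniqueMin
    h2.u_contDiff.continuous hδ
  have hDel := Del_eq_of_Del_zero_eq_zero hΔ
  refine ⟨δ, hδ, min (c / 2) ε, lt_min (half_pos hc) hε, fun p hp => ?_, fun p hp hpδ => ?_⟩
  · rcases eq_or_ne p 0 with rfl | hp0
    · simp
    calc min (c / 2) ε * ‖p‖ ^ 2 ≤ c / 2 * ‖p‖ ^ 2 := by gcongr; exact min_le_left _ _
      _ ≤ Del u v w p (mMin w) := by linarith [hDel p, h2.u_min p, hquad p hp0 hp]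
      _ ≤ |Del u v w p (mMin w)| := le_abs_self _
  · have hp0 : p ≠ 0 := ne_zero_of_norm_ne_zero (hδ.trans_le hpδ).ne'
    calc min (c / 2) ε ≤ ε := min_le_right _ _
      _ ≤ Del u v w p (mMin w) := by linarith [hDel p, hεu p hp hpδ, h3.uniqueMax p hp hp0]
      _ ≤ |Del u v w p (mMin w)| := le_abs_self _

/-- in the threshold-eigenvalue case there are `c, δ > 0` with
`|Δ(p,m)| ≥ c|p|²` for `|p| < δ` and `|Δ(p,m)| ≥ c` for `p ∈ 𝕋³` with `|p| ≥ δ`. -/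
theorem Del_bounds_eigenvalue_case
    (u v : T3 → ℝ) (w : T3 → T3 → ℝ) (θ : ℝ≥0)
    (W : Matrix (Fin 3) (Fin 3) ℝ) (l1 l2 : ℝ)
    (hb : BasicSetup u v w)
    (h1i : Assumption1i w θ) (h1ii : Assumption1ii w W l1 l2)
    (h2 : Assumption2 u v θ) (h3 : Assumption3 v w)
    (hΔ : Del u v w 0 (mMin w) = 0) (hv0 : v 0 = 0) :
    ∃ δ > (0:ℝ), ∃ c > (0:ℝ),
      (∀ p : T3, ‖p‖ < δ → c * ‖p‖ ^ 2 ≤ |Del u v w p (mMin w)|) ∧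
      (∀ p ∈ cube, δ ≤ ‖p‖ → c ≤ |Del u v w p (mMin w)|) :=
  Del_bounds_eigenvalue_case_general u v w θ hb h2 h3 hΔ
end
end
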